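/- arXiv:2604.20024 — 8 statements merged into one kernel-verified Lean document; each statement's English description precedes it below -/
import Mathlib

section
/- Let d ≥ 1, let V be a real symmetric positive definite d×d matrix, let β > 0, and let δ, ρ satisfy 0 < 2δ < ρ < 1. Set α = 2β√d/(ρ − 2δ). Let θ̂, θ* ∈ ℝ^d satisfy ‖θ̂ − θ*‖_V ≤ β, let u ∈ ℝ^d, and define θ̃ = V^{-1/2} Q_{α,u}(V^{1/2} θ̂). Then ‖θ̃ − θ*‖_V ≤ β·(1 + d/(ρ − 2δ)). -/
open Matrix Finset

/-- Randomized grid rounding map: coordinatewise,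
`(Q_{α,u}(z))_j = α·⌊(z_j − u_j)/α⌋ + u_j + α/2`. -/
noncomputable def gridRound {d : ℕ} (α : ℝ) (u z : Fin d → ℝ) : Fin d → ℝ :=
  fun j => α * (⌊(z j - u j) / α⌋ : ℤ) + u j + α / 2

/-- The positive semidefinite square root, as defined in the older Mathlib
(removed since). -/
noncomputable def Matrix.PosSemidef.sqrt {n : Type*} [Fintype n] [DecidableEq n]
    {A : Matrix n n ℝ} (hA : A.PosSemidef) : Matrix n n ℝ :=
  hA.1.eigenvectorUnitary.1 * diagonal ((√·) ∘ hA.1.eigenvalues) *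
    (star hA.1.eigenvectorUnitary : Matrix n n ℝ)

/-! With `S = V^{1/2}` the `V`-norm of `x` is the Euclidean norm of `S x`, and `S θ̃` is the grid
rounding of `S θ̂`, which moves every coordinate by at most `α / 2`, hence the point by at most
`√d α / 2 = β d / (ρ - 2δ)`. The triangle inequality in whitened coordinates adds `β`. -/

namespace Matrix.PosSemidef

variable {n : Type*} [Fintype n] [DecidableEq n] {A : Matrix n n ℝ}

lemma sqrt_transpose (hA : A.PosSemidef) : hA.sqrtᵀ = hA.sqrt := by
  rw [← conjTranspose_eq_transpose_of_trivial, PosSemidef.sqrt, conjTranspose_mul,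
    conjTranspose_mul, star_eq_conjTranspose, conjTranspose_conjTranspose,
    diagonal_conjTranspose, Matrix.mul_assoc, star_trivial]

lemma sqrt_mul_self (hA : A.PosSemidef) : hA.sqrt * hA.sqrt = A := by
  set U : Matrix n n ℝ := (hA.1.eigenvectorUnitary : Matrix n n ℝ)
  set D := diagonal ((√·) ∘ hA.1.eigenvalues)
  have hU : star U * U = 1 := Unitary.coe_star_mul_self _
  have hD : D * D = diagonal (RCLike.ofReal ∘ hA.1.eigenvalues) := by
    rw [diagonal_mul_diagonal]
    congr 1 with i
    simp [Real.mul_self_sqrt (hA.eigenvalues_nonneg i)]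
  calc hA.sqrt * hA.sqrt = U * (D * (star U * U) * D) * star U := by
        simp only [PosSemidef.sqrt, U, D, Matrix.mul_assoc]
    _ = A := by
        rw [hU, Matrix.mul_one, hD]
        conv_rhs => rw [hA.1.spectral_theorem, Unitary.conjStarAlgAut_apply]

lemma sqrt_transpose_mul_self (hA : A.PosSemidef) : hA.sqrtᵀ * hA.sqrt = A := by
  rw [hA.sqrt_transpose, hA.sqrt_mul_self]

end Matrix.PosSemidef

lemma Matrix.PosDef.isUnit_det_sqrt {n : Type*} [Fintype n] [DecidableEq n]
    {A : Matrix n n ℝ} (hA : A.PosDef) : IsUnit hA.posSemidef.sqrt.det := by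
  have hdet : hA.posSemidef.sqrt.det * hA.posSemidef.sqrt.det = A.det := by
    rw [← det_mul, hA.posSemidef.sqrt_mul_self]
  exact isUnit_of_mul_isUnit_left (hdet ▸ hA.det_pos.ne'.isUnit)

lemma Matrix.norm_toLp_mulVec {m n : Type*} [Fintype m] [Fintype n]
    (S : Matrix m n ℝ) (x : n → ℝ) :
    ‖WithLp.toLp 2 (S *ᵥ x)‖ = √(x ⬝ᵥ ((Sᵀ * S) *ᵥ x)) := by
  rw [norm_eq_sqrt_real_inner, ← mulVec_mulVec, dotProduct_mulVec, vecMul_transpose]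
  rfl

section gridRound

variable {d : ℕ} {α : ℝ}

lemma abs_gridRound_sub_le (hα : 0 < α) (u z : Fin d → ℝ) (j : Fin d) :
    |gridRound α u z j - z j| ≤ α / 2 := by
  set t := (z j - u j) / α
  have hαt : α * t = z j - u j := mul_div_cancel₀ _ hα.ne'
  have hround : gridRound α u z j - z j = α * ((⌊t⌋ : ℝ) - t) + α / 2 := by
    simp only [gridRound]
    linear_combination hαt
  have hfloor_le : (⌊t⌋ : ℝ) ≤ t := Int.floor_le t
  have hlt_floor_add_one : t < ⌊t⌋ + 1 := Int.lt_floor_add_one t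
  rw [hround, abs_le]
  constructor <;> nlinarith

lemma norm_toLp_gridRound_sub_le (hα : 0 < α) (u z : Fin d → ℝ) :
    ‖WithLp.toLp 2 (gridRound α u z - z)‖ ≤ √d * (α / 2) := by
  calc ‖WithLp.toLp 2 (gridRound α u z - z)‖
      = √(∑ j, ‖gridRound α u z j - z j‖ ^ 2) := EuclideanSpace.norm_eq _
    _ ≤ √(∑ _j : Fin d, (α / 2) ^ 2) := by
        gcongr with j
        exact abs_gridRound_sub_le hα u z j
    _ = √d * (α / 2) := by
        rw [sum_const, card_univ, Fintype.card_fin, nsmul_eq_mul,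
          Real.sqrt_mul (Nat.cast_nonneg d), Real.sqrt_sq (by positivity)]

end gridRound

theorem sqrt_dotProduct_transpose_mul_self_mulVec_le_of_gridRound {d : ℕ} {n : Type*} [Fintype n]
    (S : Matrix (Fin d) n ℝ) {α : ℝ} (hα : 0 < α) (u : Fin d → ℝ) {θtilde θhat : n → ℝ}
    (hθ : S *ᵥ θtilde = gridRound α u (S *ᵥ θhat)) (θstar : n → ℝ) :
    √((θtilde - θstar) ⬝ᵥ ((Sᵀ * S) *ᵥ (θtilde - θstar)))
      ≤ √d * (α / 2) + √((θhat - θstar) ⬝ᵥ ((Sᵀ * S) *ᵥ (θhat - θstar))) := by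
  have hsplit : S *ᵥ (θtilde - θstar)
      = (gridRound α u (S *ᵥ θhat) - S *ᵥ θhat) + S *ᵥ (θhat - θstar) := by
    rw [mulVec_sub, hθ, mulVec_sub]
    abel
  rw [← S.norm_toLp_mulVec, ← S.norm_toLp_mulVec, hsplit, WithLp.toLp_add]
  grw [norm_add_le, norm_toLp_gridRound_sub_le hα]

theorem stmt_3_general (d : ℕ) (hd : 1 ≤ d) (V : Matrix (Fin d) (Fin d) ℝ)
    (hV : V.PosDef) (β δ ρ : ℝ) (hβ : 0 < β)
    (hδρ : 2 * δ < ρ)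
    (α : ℝ) (hα : α = 2 * β * Real.sqrt d / (ρ - 2 * δ))
    (θhat θstar : Fin d → ℝ)
    (hconf : Real.sqrt ((θhat - θstar) ⬝ᵥ (V *ᵥ (θhat - θstar))) ≤ β)
    (u θtilde : Fin d → ℝ)
    (hθ : θtilde = (hV.posSemidef.sqrt)⁻¹ *ᵥ
      gridRound α u (hV.posSemidef.sqrt *ᵥ θhat)) :
    Real.sqrt ((θtilde - θstar) ⬝ᵥ (V *ᵥ (θtilde - θstar)))
      ≤ β * (1 + d / (ρ - 2 * δ)) := by
  have hgap : 0 < ρ - 2 * δ := sub_pos.mpr hδρ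
  have hsqrt_d : 0 < √(d : ℝ) := Real.sqrt_pos.mpr (by exact_mod_cast hd)
  have hα_pos : 0 < α := by rw [hα]; positivity
  have hcell : √d * (α / 2) = β * (d / (ρ - 2 * δ)) := by
    have hd_sq : √(d : ℝ) * √d = d := Real.mul_self_sqrt (Nat.cast_nonneg d)
    rw [hα]
    field_simp
    linear_combination hd_sq
  set S := hV.posSemidef.sqrt
  have hSθ : S *ᵥ θtilde = gridRound α u (S *ᵥ θhat) := by
    rw [hθ, mulVec_mulVec, mul_nonsing_inv _ hV.isUnit_det_sqrt, one_mulVec]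
  have hV_eq : Sᵀ * S = V := hV.posSemidef.sqrt_transpose_mul_self
  calc _ ≤ √d * (α / 2) + √((θhat - θstar) ⬝ᵥ (V *ᵥ (θhat - θstar))) := by
        simpa only [hV_eq] using
          sqrt_dotProduct_transpose_mul_self_mulVec_le_of_gridRound S hα_pos u hSθ θstar
    _ ≤ β * (d / (ρ - 2 * δ)) + β := by rw [hcell]; gcongr
    _ = β * (1 + d / (ρ - 2 * δ)) := by ring

theorem stmt_3 (d : ℕ) (hd : 1 ≤ d) (V : Matrix (Fin d) (Fin d) ℝ)
    (hV : V.PosDef) (β δ ρ : ℝ) (hβ : 0 < β)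
    (hδ : 0 < 2 * δ) (hδρ : 2 * δ < ρ) (hρ : ρ < 1)
    (α : ℝ) (hα : α = 2 * β * Real.sqrt d / (ρ - 2 * δ))
    (θhat θstar : Fin d → ℝ)
    (hconf : Real.sqrt ((θhat - θstar) ⬝ᵥ (V *ᵥ (θhat - θstar))) ≤ β)
    (u θtilde : Fin d → ℝ)
    (hθ : θtilde = (hV.posSemidef.sqrt)⁻¹ *ᵥ
      gridRound α u (hV.posSemidef.sqrt *ᵥ θhat)) :
    Real.sqrt ((θtilde - θstar) ⬝ᵥ (V *ᵥ (θtilde - θstar)))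
      ≤ β * (1 + d / (ρ - 2 * δ)) :=
  stmt_3_general d hd V hV β δ ρ hβ hδρ α hα θhat θstar hconf u θtilde hθ
end

section
/- Let α > 0 and x, y ∈ ℝ. If u is drawn uniformly from the interval [0, α), then the probability that x and y are rounded to different grid cells, i.e. that ⌊(x − u)/α⌋ ≠ ⌊(y − u)/α⌋, is at most |x − y|/α. Equivalently, the Lebesgue measure of the set {u ∈ [0, α) : ⌊(x − u)/α⌋ ≠ ⌊(y − u)/α⌋} is at most |x − y|. -/
/-!
For `x ≤ y`, the points `x` and `y` land in different cells exactly when some grid boundary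
`u + kα` lies in `(x, y]`. So the bad shifts lie in the trace on the fundamental domain `[0, α)`
of the `αℤ`-translates of `(x, y]`, and that trace has measure at most the length of `(x, y]`.
-/

open MeasureTheory Set
open scoped Pointwise

theorem isAddFundamentalDomain_Ico {T : ℝ} (hT : 0 < T) (t : ℝ)
    (μ : Measure ℝ := by volume_tac) :
    IsAddFundamentalDomain (AddSubgroup.zmultiples T) (Ico t (t + T)) μ := by
  refine IsAddFundamentalDomain.mk' nullMeasurableSet_Ico fun x => ?_
  have hbij : Function.Bijective
      (codRestrict (fun n : ℤ => n • T) (AddSubgroup.zmultiples T) _) :=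
    (Equiv.ofInjective (fun n : ℤ => n • T) (zsmul_left_strictMono hT).injective).bijective
  refine hbij.existsUnique_iff.2 ?_
  simpa only [add_comm x] using! existsUnique_add_zsmul_mem_Ico hT x t

theorem MeasureTheory.IsAddFundamentalDomain.measure_inter_iUnion_vadd_le {G α : Type*}
    [AddGroup G] [AddAction G α] [MeasurableSpace α] [Countable G] [MeasurableConstVAdd G α]
    {s : Set α} {μ : Measure α} [VAddInvariantMeasure G α μ]
    (h : IsAddFundamentalDomain G s μ) (t : Set α) :
    μ (s ∩ ⋃ g : G, g +ᵥ t) ≤ μ t :=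
  calc μ (s ∩ ⋃ g : G, g +ᵥ t) = μ (⋃ g : G, (g +ᵥ t) ∩ s) := by
        rw [inter_iUnion]; simp_rw [inter_comm]
    _ ≤ ∑' g : G, μ ((g +ᵥ t) ∩ s) := measure_iUnion_le _
    _ = μ t := (h.measure_eq_tsum t).symm

theorem exists_add_zsmul_mem_Ioc_of_floor_ne {α x y u : ℝ} (hα : 0 < α) (hxy : x ≤ y)
    (h : ⌊(x - u) / α⌋ ≠ ⌊(y - u) / α⌋) : ∃ k : ℤ, u + k • α ∈ Ioc x y := by
  have hlt : ⌊(x - u) / α⌋ < ⌊(y - u) / α⌋ :=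
    (Int.floor_le_floor (by gcongr)).lt_of_ne h
  refine ⟨⌊(y - u) / α⌋, ?_, ?_⟩
  · have := (div_lt_iff₀ hα).mp (Int.floor_lt.mp hlt)
    rw [zsmul_eq_mul]; linarith
  · have := (le_div_iff₀ hα).mp (Int.floor_le ((y - u) / α))
    rw [zsmul_eq_mul]; linarith

theorem volume_floor_div_ne_le {α : ℝ} (hα : 0 < α) {x y : ℝ} (hxy : x ≤ y) :
    volume {u ∈ Ico (0 : ℝ) α | ⌊(x - u) / α⌋ ≠ ⌊(y - u) / α⌋} ≤ ENNReal.ofReal (y - x) := by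
  calc volume {u ∈ Ico (0 : ℝ) α | ⌊(x - u) / α⌋ ≠ ⌊(y - u) / α⌋}
      ≤ volume (Ico 0 (0 + α) ∩ ⋃ g : AddSubgroup.zmultiples α, g +ᵥ Ioc x y) := by
        refine measure_mono fun u ⟨hu, hne⟩ => ⟨by rwa [zero_add], ?_⟩
        obtain ⟨k, hk⟩ := exists_add_zsmul_mem_Ioc_of_floor_ne hα hxy hne
        refine mem_iUnion.2 ⟨-⟨k • α, k, rfl⟩, u + k • α, hk, ?_⟩
        simp [AddSubgroup.vadd_def]
    _ ≤ volume (Ioc x y) := (isAddFundamentalDomain_Ico hα 0).measure_inter_iUnion_vadd_le _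
    _ = ENNReal.ofReal (y - x) := Real.volume_Ioc

theorem stmt_4 (α : ℝ) (hα : 0 < α) (x y : ℝ) :
    volume {u ∈ Set.Ico (0 : ℝ) α | ⌊(x - u) / α⌋ ≠ ⌊(y - u) / α⌋}
        ≤ ENNReal.ofReal |x - y| ∧
      volume {u ∈ Set.Ico (0 : ℝ) α | ⌊(x - u) / α⌋ ≠ ⌊(y - u) / α⌋}
          / ENNReal.ofReal α
        ≤ ENNReal.ofReal (|x - y| / α) := by
  have hvol : volume {u ∈ Set.Ico (0 : ℝ) α | ⌊(x - u) / α⌋ ≠ ⌊(y - u) / α⌋}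
      ≤ ENNReal.ofReal |x - y| := by
    rcases le_total x y with hxy | hyx
    · simpa only [abs_sub_comm x, abs_of_nonneg (sub_nonneg.2 hxy)]
        using volume_floor_div_ne_le hα hxy
    · simpa only [ne_comm, abs_of_nonneg (sub_nonneg.2 hyx)]
        using volume_floor_div_ne_le hα hyx
  refine ⟨hvol, ?_⟩
  rw [ENNReal.ofReal_div_of_pos hα]
  exact ENNReal.div_le_div_right hvol _
end

section
/- Let d ≥ 1, α > 0, and z¹, z² ∈ ℝ^d. If u is drawn uniformly from the cube [0, α)^d, then the probability that the randomized grid rounding map disagrees on the two points satisfies P(Q_{α,u}(z¹) ≠ Q_{α,u}(z²)) ≤ ‖z¹ − z²‖₁/α ≤ √d·‖z¹ − z²‖₂/α. -/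
/-!
Rounding differs only if, in some coordinate `j`, the shifted grid `u_j + αℤ` has a point
between `z¹_j` and `z²_j`. For fixed `j` these shifts are the translates of an interval of length
`|z¹_j − z²_j|` by `αℤ`, and `[0, α)` is a fundamental domain for `αℤ`, so they occupy a fraction
at most `|z¹_j − z²_j| / α` of `[0, α)`. A union bound over the coordinates of the product
measure gives the first inequality, and Cauchy–Schwarz the second.
-/

open MeasureTheory Finset

open scoped Pointwise

theorem MeasureTheory.Measure.pi_pi_update_mul {ι : Type*} [Fintype ι] [DecidableEq ι]
    {X : ι → Type*} [∀ i, MeasurableSpace (X i)] (μ : ∀ i, Measure (X i))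
    [∀ i, SigmaFinite (μ i)] (C : ∀ i, Set (X i)) (j : ι) (B : Set (X j)) :
    Measure.pi μ (Set.univ.pi (Function.update C j B)) * μ j (C j)
      = μ j B * Measure.pi μ (Set.univ.pi C) := by
  have hupdate : (fun i => μ i (Function.update C j B i))
      = Function.update (fun i => μ i (C i)) j (μ j B) := by
    ext i; exact Function.apply_update (fun i => μ i) C j B i
  rw [Measure.pi_pi, Measure.pi_pi, hupdate, prod_update_of_mem (mem_univ j),
    ← mul_prod_erase univ _ (mem_univ j), sdiff_singleton_eq_erase]
  ring

theorem MeasureTheory.Measure.pi_iUnion_pi_update_div_le {ι : Type*} [Fintype ι] [DecidableEq ι]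
    {X : ι → Type*} [∀ i, MeasurableSpace (X i)] (μ : ∀ i, Measure (X i))
    [∀ i, SigmaFinite (μ i)] (C : ∀ i, Set (X i)) (hC₀ : ∀ i, μ i (C i) ≠ 0)
    (hC : ∀ i, μ i (C i) ≠ ⊤) (B : ∀ i, Set (X i)) :
    Measure.pi μ (⋃ j, Set.univ.pi (Function.update C j (B j))) / Measure.pi μ (Set.univ.pi C)
      ≤ ∑ j, μ j (B j) / μ j (C j) := by
  have hpi₀ : Measure.pi μ (Set.univ.pi C) ≠ 0 := by
    rw [Measure.pi_pi]; exact prod_ne_zero_iff.2 fun i _ => hC₀ i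
  have hpi : Measure.pi μ (Set.univ.pi C) ≠ ⊤ := by
    rw [Measure.pi_pi]; exact ENNReal.prod_ne_top fun i _ => hC i
  calc Measure.pi μ (⋃ j, Set.univ.pi (Function.update C j (B j))) / Measure.pi μ (Set.univ.pi C)
      ≤ (∑ j, Measure.pi μ (Set.univ.pi (Function.update C j (B j))))
          / Measure.pi μ (Set.univ.pi C) := by
        gcongr
        exact (measure_iUnion_le _).trans_eq (tsum_fintype _)
    _ = ∑ j, μ j (B j) / μ j (C j) := by
        simp only [div_eq_mul_inv, sum_mul]
        refine Finset.sum_congr rfl fun j _ => ?_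
        rw [← div_eq_mul_inv, ← div_eq_mul_inv, ENNReal.div_eq_div_iff (hC₀ j) (hC j) hpi₀ hpi,
          mul_comm, Measure.pi_pi_update_mul, mul_comm]

theorem Finset.sum_abs_le_sqrt_card_mul_sqrt_sum_sq {ι : Type*} (s : Finset ι) (f : ι → ℝ) :
    ∑ i ∈ s, |f i| ≤ √(#s : ℝ) * √(∑ i ∈ s, f i ^ 2) := by
  rw [← Real.sqrt_mul (Nat.cast_nonneg _)]
  refine Real.le_sqrt_of_sq_le ?_
  simpa only [sq_abs] using sq_sum_le_card_mul_sum_sq (s := s) (f := fun i => |f i|)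

def separatingShifts (α a b : ℝ) : Set ℝ := {t | ⌊(a - t) / α⌋ ≠ ⌊(b - t) / α⌋}

lemma separatingShifts_comm (α a b : ℝ) : separatingShifts α a b = separatingShifts α b a := by
  ext t; exact ne_comm

lemma separatingShifts_subset_iUnion_vadd_Ioc {α a b : ℝ} (hα : 0 < α) (hab : a ≤ b) :
    separatingShifts α a b ⊆ ⋃ g : AddSubgroup.zmultiples α, g +ᵥ Set.Ioc a b := by
  intro t ht
  set k := ⌊(b - t) / α⌋
  have hlt : ⌊(a - t) / α⌋ < k := (Int.floor_le_floor (by gcongr)).lt_of_ne ht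
  have hak : a - t < k * α := by
    rw [← div_lt_iff₀ hα]; exact Int.floor_lt.mp hlt
  have hkb : k * α ≤ b - t := by
    rw [← le_div_iff₀ hα]; exact Int.floor_le _
  refine Set.mem_iUnion.mpr ⟨-⟨k • α, AddSubgroup.zsmul_mem_zmultiples α k⟩, ?_⟩
  refine Set.mem_vadd_set.mpr ⟨t + k * α, ⟨by linarith, by linarith⟩, ?_⟩
  rw [AddSubgroup.vadd_def, vadd_eq_add, AddSubgroup.coe_neg]
  simp [zsmul_eq_mul]

lemma volume_separatingShifts_inter_Ico_le {α : ℝ} (hα : 0 < α) (a b : ℝ) :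
    volume (separatingShifts α a b ∩ Set.Ico 0 α) ≤ ENNReal.ofReal |a - b| := by
  wlog hab : a ≤ b generalizing a b
  · rw [separatingShifts_comm, abs_sub_comm]
    exact this b a (le_of_not_ge hab)
  have hF := isAddFundamentalDomain_Ioc hα 0 (volume : Measure ℝ)
  rw [zero_add] at hF
  calc volume (separatingShifts α a b ∩ Set.Ico 0 α)
      = volume (separatingShifts α a b ∩ Set.Ioc 0 α) :=
        measure_congr ((ae_eq_refl _).inter Ico_ae_eq_Ioc)
    _ ≤ volume (⋃ g : AddSubgroup.zmultiples α, (g +ᵥ Set.Ioc a b) ∩ Set.Ioc 0 α) := by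
        rw [← Set.iUnion_inter]
        exact measure_mono
          (Set.inter_subset_inter_left _ (separatingShifts_subset_iUnion_vadd_Ioc hα hab))
    _ ≤ ∑' g : AddSubgroup.zmultiples α, volume ((g +ᵥ Set.Ioc a b) ∩ Set.Ioc 0 α) :=
        measure_iUnion_le _
    _ = volume (Set.Ioc a b) := (hF.measure_eq_tsum _).symm
    _ = ENNReal.ofReal |a - b| := by
        rw [Real.volume_Ioc, abs_sub_comm, abs_of_nonneg (sub_nonneg.2 hab)]

lemma exists_mem_separatingShifts_of_gridRound_ne {d : ℕ} {α : ℝ} {u z₁ z₂ : Fin d → ℝ}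
    (h : gridRound α u z₁ ≠ gridRound α u z₂) : ∃ j, u j ∈ separatingShifts α (z₁ j) (z₂ j) := by
  by_contra! hsep
  exact h (funext fun j => by simp only [gridRound, not_not.mp (hsep j)])

theorem stmt_5_general (d : ℕ) (α : ℝ) (hα : 0 < α)
    (z₁ z₂ : Fin d → ℝ) :
    volume {u ∈ Set.univ.pi fun _ : Fin d => Set.Ico (0 : ℝ) α |
          gridRound α u z₁ ≠ gridRound α u z₂}
        / volume (Set.univ.pi fun _ : Fin d => Set.Ico (0 : ℝ) α)
      ≤ ENNReal.ofReal ((∑ j : Fin d, |z₁ j - z₂ j|) / α) ∧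
    (∑ j : Fin d, |z₁ j - z₂ j|) / α
      ≤ Real.sqrt d * Real.sqrt (∑ j : Fin d, (z₁ j - z₂ j) ^ 2) / α := by
  have hcs := div_le_div_of_nonneg_right
    (sum_abs_le_sqrt_card_mul_sqrt_sum_sq univ fun j => z₁ j - z₂ j) hα.le
  rw [card_univ, Fintype.card_fin] at hcs
  refine ⟨?_, hcs⟩
  set C : Fin d → Set ℝ := fun _ => Set.Ico 0 α
  set B : Fin d → Set ℝ := fun j => separatingShifts α (z₁ j) (z₂ j) ∩ C j
  have hsub : {u ∈ Set.univ.pi C | gridRound α u z₁ ≠ gridRound α u z₂}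
      ⊆ ⋃ j, Set.univ.pi (Function.update C j (B j)) := by
    rintro u ⟨hu, hne⟩
    obtain ⟨j, hj⟩ := exists_mem_separatingShifts_of_gridRound_ne hne
    refine Set.mem_iUnion.mpr ⟨j, fun i _ => ?_⟩
    rcases eq_or_ne i j with rfl | hij
    · simpa using ⟨hj, hu i trivial⟩
    · simpa [hij] using hu i trivial
  calc volume {u ∈ Set.univ.pi C | gridRound α u z₁ ≠ gridRound α u z₂} / volume (Set.univ.pi C)
      ≤ volume (⋃ j, Set.univ.pi (Function.update C j (B j))) / volume (Set.univ.pi C) :=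
        ENNReal.div_le_div_right (measure_mono hsub) _
    _ ≤ ∑ j, volume (B j) / volume (C j) :=
        Measure.pi_iUnion_pi_update_div_le _ C (by simp [C, hα]) (by simp [C]) B
    _ ≤ ∑ j, ENNReal.ofReal (|z₁ j - z₂ j| / α) := by
        gcongr with j
        rw [ENNReal.ofReal_div_of_pos hα, Real.volume_Ico, sub_zero]
        gcongr
        exact volume_separatingShifts_inter_Ico_le hα _ _
    _ = ENNReal.ofReal ((∑ j, |z₁ j - z₂ j|) / α) := by
        rw [← ENNReal.ofReal_sum_of_nonneg fun j _ => by positivity, sum_div]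

theorem stmt_5 (d : ℕ) (hd : 1 ≤ d) (α : ℝ) (hα : 0 < α)
    (z₁ z₂ : Fin d → ℝ) :
    volume {u ∈ Set.univ.pi fun _ : Fin d => Set.Ico (0 : ℝ) α |
          gridRound α u z₁ ≠ gridRound α u z₂}
        / volume (Set.univ.pi fun _ : Fin d => Set.Ico (0 : ℝ) α)
      ≤ ENNReal.ofReal ((∑ j : Fin d, |z₁ j - z₂ j|) / α) ∧
    (∑ j : Fin d, |z₁ j - z₂ j|) / α
      ≤ Real.sqrt d * Real.sqrt (∑ j : Fin d, (z₁ j - z₂ j) ^ 2) / α :=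
  stmt_5_general d α hα z₁ z₂
end

section
/- Let M be a real symmetric d×d matrix with M ⪰ I, i.e. M − I is positive semidefinite. Then M is invertible and for every u ∈ ℝ^d, ‖u‖₂² ≤ det(M) · (uᵀ M^{-1} u). -/
/-!
Write `λ₁, …, λ_d` for the eigenvalues of `M`. From `M ⪰ I` every `λᵢ ≥ 1`, so `M` is positive
definite and each `λᵢ ≤ ∏ⱼ λⱼ = det M`. Hence every eigenvalue `det M / λᵢ` of `det M • M⁻¹` is at
least `1`, i.e. `det M • M⁻¹ ⪰ I`, and evaluating this quadratic form at `u` gives the inequality.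
-/

open Matrix Finset

open scoped MatrixOrder

theorem Finset.single_le_prod_of_one_le {ι R : Type*} [CommMonoidWithZero R] [PartialOrder R]
    [ZeroLEOneClass R] [PosMulMono R] {s : Finset ι} {f : ι → R} (hf : ∀ i ∈ s, 1 ≤ f i)
    {i : ι} (hi : i ∈ s) : f i ≤ ∏ j ∈ s, f j := by
  simpa using prod_le_prod_of_subset_of_one_le (singleton_subset_iff.2 hi)
    (by simpa using zero_le_one.trans (hf i hi)) fun j hj _ ↦ hf j hj

namespace Matrix

variable {n : Type*} [DecidableEq n] {A : Matrix n n ℝ}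

theorem posDef_of_one_le (hA : 1 ≤ A) : A.PosDef :=
  add_sub_cancel 1 A ▸ PosDef.one.add_posSemidef hA

variable [Fintype n]

theorem spectrum_subset_Icc_det_of_one_le (hA : 1 ≤ A) : spectrum ℝ A ⊆ Set.Icc 1 A.det := by
  have hH := (posDef_of_one_le hA).isHermitian
  have hge : ∀ x ∈ spectrum ℝ A, 1 ≤ x := (CFC.one_le_iff A hH.isSelfAdjoint).mp hA
  intro x hx
  refine ⟨hge x hx, ?_⟩
  obtain ⟨i, rfl⟩ := hH.spectrum_real_eq_range_eigenvalues ▸ hx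
  rw [hH.det_eq_prod_eigenvalues]
  simp only [RCLike.ofReal_real_eq_id]
  exact single_le_prod_of_one_le (fun j _ ↦ hge _ (hH.eigenvalues_mem_spectrum_real j))
    (mem_univ i)

theorem one_le_det_smul_inv (hA : 1 ≤ A) : 1 ≤ A.det • A⁻¹ := by
  have hH := (posDef_of_one_le hA).isHermitian
  have hspec := spectrum_subset_Icc_det_of_one_le hA
  have hcont : ContinuousOn (fun x : ℝ ↦ x⁻¹) (spectrum ℝ A) :=
    continuousOn_inv₀.mono fun x hx ↦ (zero_lt_one.trans_le (hspec hx).1).ne'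
  rw [nonsing_inv_eq_ringInverse,
    ← cfc_ringInverse_id (R := ℝ) A (posDef_of_one_le hA).isUnit hH.isSelfAdjoint,
    ← cfc_const_mul _ _ _ hcont]
  refine (one_le_cfc_iff (A.det * ·⁻¹) A (continuousOn_const.mul hcont) hH.isSelfAdjoint).mpr
    fun x hx ↦ ?_
  rw [le_mul_inv_iff₀ (zero_lt_one.trans_le (hspec hx).1), one_mul]
  exact (hspec hx).2

end Matrix

theorem stmt_7_general (d : ℕ) (M : Matrix (Fin d) (Fin d) ℝ)
    (hM : (M - 1).PosSemidef) :
    IsUnit M ∧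
      ∀ u : Fin d → ℝ,
        ∑ j : Fin d, (u j) ^ 2 ≤ M.det * (u ⬝ᵥ (M⁻¹ *ᵥ u)) := by
  have hM1 : 1 ≤ M := le_iff.mpr hM
  refine ⟨(posDef_of_one_le hM1).isUnit, fun u ↦ ?_⟩
  have hform := (le_iff.mp (one_le_det_smul_inv hM1)).dotProduct_mulVec_nonneg u
  simp only [star_trivial, sub_mulVec, smul_mulVec, one_mulVec, dotProduct_sub, dotProduct_smul,
    smul_eq_mul, sub_nonneg] at hform
  simpa [dotProduct, sq] using hform

theorem stmt_7 (d : ℕ) (M : Matrix (Fin d) (Fin d) ℝ)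
    (hsymm : M.IsSymm) (hM : (M - 1).PosSemidef) :
    IsUnit M ∧
      ∀ u : Fin d → ℝ,
        ∑ j : Fin d, (u j) ^ 2 ≤ M.det * (u ⬝ᵥ (M⁻¹ *ᵥ u)) :=
  stmt_7_general d M hM
end

section
/- Let A and B be real symmetric positive definite d×d matrices with A ⪰ B, i.e. A − B is positive semidefinite. Then for every x ∈ ℝ^d, xᵀ B^{-1} x ≤ (det(A)/det(B)) · (xᵀ A^{-1} x). -/
/-!
Whitening by `T = A^{-1/2}` turns `B ≤ A` into `N = T B T ≤ 1`. Every eigenvalue of `N⁻¹` is then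
at least `1`, hence at most the product of all of them, `det N⁻¹ = det A / det B`; that is,
`N⁻¹ ≤ (det A / det B) • 1`, and conjugating back by `T` gives `B⁻¹ ≤ (det A / det B) • A⁻¹`.
-/

open Matrix

section LoewnerOrder

open scoped MatrixOrder ComplexOrder

namespace Matrix

variable {n : Type*} [Fintype n] [DecidableEq n]

section RCLike

variable {𝕜 : Type*} [RCLike 𝕜]

theorem PosDef.isUnit_det_sqrt_s8 {A : Matrix n n 𝕜} (hA : A.PosDef) : IsUnit (CFC.sqrt A).det :=
  (isUnit_iff_isUnit_det _).mp ((CFC.isUnit_sqrt_iff A hA.posSemidef.nonneg).mpr hA.isUnit)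

theorem PosDef.sqrt_inv_mul_mul_sqrt_inv {A : Matrix n n 𝕜} (hA : A.PosDef) :
    CFC.sqrt A⁻¹ * A * CFC.sqrt A⁻¹ = 1 := by
  set T := CFC.sqrt A⁻¹
  have hT : IsUnit T.det := hA.inv.isUnit_det_sqrt_s8
  have hTT : T * T = A⁻¹ := CFC.sqrt_mul_sqrt_self A⁻¹ hA.inv.posSemidef.nonneg
  rw [← nonsing_inv_nonsing_inv A ((isUnit_iff_isUnit_det A).mp hA.isUnit), ← hTT, mul_inv_rev,
    ← mul_assoc, mul_nonsing_inv _ hT, one_mul, nonsing_inv_mul _ hT]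

theorem PosDef.one_le_inv_of_le_one {N : Matrix n n 𝕜} (hN : N.PosDef) (h : N ≤ 1) :
    1 ≤ N⁻¹ := by
  have := IsSelfAdjoint.conjugate_le_conjugate h (CFC.sqrt_nonneg N⁻¹).isSelfAdjoint
  rwa [hN.sqrt_inv_mul_mul_sqrt_inv, mul_one,
    CFC.sqrt_mul_sqrt_self N⁻¹ hN.inv.posSemidef.nonneg] at this

end RCLike

theorem le_det_smul_one_of_one_le {M : Matrix n n ℝ} (h : 1 ≤ M) : M ≤ M.det • 1 := by
  have hM : M.IsHermitian := by simpa using (le_iff.mp h).isHermitian.add isHermitian_one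
  have one_le_eigenvalues (i : n) : 1 ≤ hM.eigenvalues i :=
    (algebraMap_le_iff_le_spectrum (r := (1 : ℝ)) hM.isSelfAdjoint).mp (by simpa using h) _
      (hM.eigenvalues_mem_spectrum_real i)
  rw [← Algebra.algebraMap_eq_smul_one]
  refine le_algebraMap_of_spectrum_le (fun x hx => ?_) hM.isSelfAdjoint
  obtain ⟨i, rfl⟩ := hM.spectrum_real_eq_range_eigenvalues ▸ hx
  simpa [hM.det_eq_prod_eigenvalues] using
    Finset.prod_le_prod_of_subset_of_one_le (Finset.subset_univ {i})
      (by simpa using zero_le_one.trans (one_le_eigenvalues i))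
      (fun j _ _ => one_le_eigenvalues j)

theorem PosDef.inv_le_det_div_smul_inv_of_le {A B : Matrix n n ℝ} (hA : A.PosDef)
    (hB : B.PosDef) (hBA : B ≤ A) : B⁻¹ ≤ (A.det / B.det) • A⁻¹ := by
  set T := CFC.sqrt A⁻¹
  have hT : IsSelfAdjoint T := (CFC.sqrt_nonneg A⁻¹).isSelfAdjoint
  have hTdet : IsUnit T.det := hA.inv.isUnit_det_sqrt_s8
  have hTT : T * T = A⁻¹ := CFC.sqrt_mul_sqrt_self A⁻¹ hA.inv.posSemidef.nonneg
  set N := T * B * T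
  have hN : N.PosDef := by
    have hTH : Tᴴ = T := hT
    have := hB.conjTranspose_mul_mul_same
      (mulVec_injective_iff_isUnit.mpr ((isUnit_iff_isUnit_det T).mpr hTdet))
    rwa [hTH] at this
  have hN_le : N ≤ 1 := hA.sqrt_inv_mul_mul_sqrt_inv ▸ hT.conjugate_le_conjugate hBA
  have hdet : N⁻¹.det = A.det / B.det := by
    rw [det_nonsing_inv, Ring.inverse_eq_inv', det_mul, det_mul, ← mul_comm T.det, ← mul_assoc,
      ← det_mul, hTT, det_nonsing_inv, Ring.inverse_eq_inv']
    field_simp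
  calc B⁻¹ = T * N⁻¹ * T := by
        simp only [N, mul_inv_rev, mul_assoc, mul_nonsing_inv_cancel_left _ _ hTdet,
          nonsing_inv_mul _ hTdet, mul_one]
    _ ≤ T * (N⁻¹.det • 1) * T :=
        hT.conjugate_le_conjugate (le_det_smul_one_of_one_le (hN.one_le_inv_of_le_one hN_le))
    _ = (A.det / B.det) • A⁻¹ := by rw [hdet, Matrix.mul_smul, mul_one, Matrix.smul_mul, hTT]

end Matrix

end LoewnerOrder

theorem stmt_8 (d : ℕ) (A B : Matrix (Fin d) (Fin d) ℝ)
    (hA : A.PosDef) (hB : B.PosDef) (hAB : (A - B).PosSemidef) :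
    ∀ x : Fin d → ℝ,
      x ⬝ᵥ (B⁻¹ *ᵥ x) ≤ (A.det / B.det) * (x ⬝ᵥ (A⁻¹ *ᵥ x)) := by
  intro x
  have hLoewner := hA.inv_le_det_div_smul_inv_of_le hB hAB
  have := (Matrix.le_iff.mp hLoewner).dotProduct_mulVec_nonneg x
  simp only [star_trivial, sub_mulVec, smul_mulVec, dotProduct_sub, dotProduct_smul,
    smul_eq_mul] at this
  linarith
end

section
/- Let d ≥ 1, λ > 0, T ≥ 1, and let a_1,…,a_T ∈ ℝ^d. Define V_1 = λ·I and V_{t+1} = V_t + a_t a_tᵀ for t = 1,…,T. Then Σ_{t=1}^{T} min{1, a_tᵀ V_t^{-1} a_t} ≤ 2·log( det(V_{T+1}) / λ^d ). -/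
open Matrix Finset

/-! By the matrix determinant lemma each rank-one update multiplies `det V_t` by `1 + q_t`, where
`q_t = a_tᵀ V_t⁻¹ a_t ≥ 0`, and `min 1 q ≤ 2 log (1 + q)`; summing, the log-determinants telescope
from `log det V_1 = d log λ` to `log det V_{T+1}`. -/

lemma min_one_le_two_mul_log_one_add {u : ℝ} (hu : 0 ≤ u) : min 1 u ≤ 2 * Real.log (1 + u) := by
  have hpos : 0 < 1 + u := by linarith
  have hlog : u / (1 + u) ≤ Real.log (1 + u) := by
    convert Real.one_sub_inv_le_log_of_pos hpos using 1
    field_simp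
    ring
  have hmin : min 1 u ≤ 2 * (u / (1 + u)) := by
    rw [mul_div_assoc', le_div_iff₀ hpos]
    rcases le_total u 1 with h | h
    · rw [min_eq_right h]; nlinarith
    · rw [min_eq_left h]; linarith
  linarith

theorem Matrix.det_add_vecMulVec {R n : Type*} [CommRing R] [Fintype n] [DecidableEq n]
    {A : Matrix n n R} (hA : IsUnit A.det) (u v : n → R) :
    (A + vecMulVec u v).det = A.det * (1 + v ⬝ᵥ (A⁻¹ *ᵥ u)) := by
  rw [vecMulVec_eq Unit, det_add_replicateCol_mul_replicateRow hA, Matrix.mul_assoc,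
    ← replicateCol_mulVec, det_one_add_mul_comm, det_one_add_replicateCol_mul_replicateRow]

lemma Matrix.PosDef.add_vecMulVec_self {n : Type*} [Fintype n] {A : Matrix n n ℝ}
    (hA : A.PosDef) (v : n → ℝ) : (A + vecMulVec v v).PosDef :=
  hA.add_posSemidef (by simpa using posSemidef_vecMulVec_self_star v)

lemma Matrix.PosDef.min_one_le_two_mul_log_det_add_vecMulVec_sub {n : Type*} [Fintype n]
    [DecidableEq n] {A : Matrix n n ℝ} (hA : A.PosDef) (v : n → ℝ) :
    min 1 (v ⬝ᵥ (A⁻¹ *ᵥ v)) ≤ 2 * (Real.log (A + vecMulVec v v).det - Real.log A.det) := by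
  have hq : 0 ≤ v ⬝ᵥ (A⁻¹ *ᵥ v) := by
    simpa using hA.inv.posSemidef.dotProduct_mulVec_nonneg v
  rw [det_add_vecMulVec hA.det_pos.ne'.isUnit, Real.log_mul hA.det_pos.ne' (by linarith),
    add_sub_cancel_left]
  exact min_one_le_two_mul_log_one_add hq

theorem stmt_11_general (d : ℕ) (lam : ℝ) (hlam : 0 < lam)
    (T : ℕ) (a : ℕ → Fin d → ℝ)
    (V : ℕ → Matrix (Fin d) (Fin d) ℝ)
    (hV1 : V 1 = lam • (1 : Matrix (Fin d) (Fin d) ℝ))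
    (hVrec : ∀ t ∈ Finset.Icc 1 T, V (t + 1) = V t + vecMulVec (a t) (a t)) :
    ∑ t ∈ Finset.Icc 1 T, min 1 (a t ⬝ᵥ ((V t)⁻¹ *ᵥ a t))
      ≤ 2 * Real.log ((V (T + 1)).det / lam ^ d) := by
  have hpos : ∀ t, 1 ≤ t → t ≤ T + 1 → (V t).PosDef := by
    intro t ht
    induction t, ht using Nat.le_induction with
    | base => intro _; rw [hV1]; exact PosDef.one.smul hlam
    | succ t ht ih =>
      intro htT
      rw [hVrec t (mem_Icc.2 ⟨ht, by omega⟩)]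
      exact (ih (by omega)).add_vecMulVec_self _
  have hV1det : (V 1).det = lam ^ d := by simp [hV1]
  calc ∑ t ∈ Icc 1 T, min 1 (a t ⬝ᵥ ((V t)⁻¹ *ᵥ a t))
      ≤ ∑ t ∈ Icc 1 T, 2 * (Real.log (V (t + 1)).det - Real.log (V t).det) := by
        refine sum_le_sum fun t ht => ?_
        obtain ⟨h1t, htT⟩ := mem_Icc.1 ht
        rw [hVrec t ht]
        exact (hpos t h1t (by omega)).min_one_le_two_mul_log_det_add_vecMulVec_sub (a t)
    _ = 2 * (Real.log (V (T + 1)).det - Real.log (V 1).det) := by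
        rw [← mul_sum, ← Ico_add_one_right_eq_Icc,
          sum_Ico_sub (fun t => Real.log (V t).det) (by omega)]
    _ = 2 * Real.log ((V (T + 1)).det / lam ^ d) := by
        rw [hV1det, Real.log_div (hpos (T + 1) (by omega) le_rfl).det_pos.ne' (by positivity)]

theorem stmt_11 (d : ℕ) (hd : 1 ≤ d) (lam : ℝ) (hlam : 0 < lam)
    (T : ℕ) (hT : 1 ≤ T) (a : ℕ → Fin d → ℝ)
    (V : ℕ → Matrix (Fin d) (Fin d) ℝ)
    (hV1 : V 1 = lam • (1 : Matrix (Fin d) (Fin d) ℝ))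
    (hVrec : ∀ t ∈ Finset.Icc 1 T, V (t + 1) = V t + vecMulVec (a t) (a t)) :
    ∑ t ∈ Finset.Icc 1 T, min 1 (a t ⬝ᵥ ((V t)⁻¹ *ᵥ a t))
      ≤ 2 * Real.log ((V (T + 1)).det / lam ^ d) :=
  stmt_11_general d lam hlam T a V hV1 hVrec
end

section
/- Let d ≥ 1, λ > 0, T ≥ 1, and let a_1,…,a_T ∈ ℝ^d. Define V_1 = λ·I and V_{t+1} = V_t + a_t a_tᵀ for t = 1,…,T. Then Σ_{t=1}^{T} min{1, √(a_tᵀ V_t^{-1} a_t)} ≤ √( 2·T·log( det(V_{T+1}) / λ^d ) ). -/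
/-!
Each rank-one update multiplies the determinant by `1 + xₜ` with `xₜ = aₜᵀ Vₜ⁻¹ aₜ` (matrix
determinant lemma), so `∑ log (1 + xₜ)` telescopes to `log (det V_{T+1} / λ^d)`. Since
`min 1 x ≤ 2 log (1 + x)` for `x ≥ 0`, this bounds `∑ min 1 xₜ`, and Cauchy–Schwarz turns the
bound on the squares `(min 1 √xₜ)² = min 1 xₜ` into the bound on `∑ min 1 √xₜ`.
-/

open Matrix Finset

namespace Real

lemma min_one_le_two_mul_log_one_add {x : ℝ} (hx : 0 ≤ x) : min 1 x ≤ 2 * log (1 + x) := by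
  have h : min 1 x ≤ 2 * (2 * x / (x + 2)) := by
    rw [mul_div_assoc', le_div_iff₀ (by linarith)]
    rcases le_total x 1 with h | h
    · rw [min_eq_right h]; nlinarith
    · rw [min_eq_left h]; linarith
  linarith [le_log_one_add_of_nonneg hx]

lemma min_one_sqrt_sq {x : ℝ} (hx : 0 ≤ x) : min 1 √x ^ 2 = min 1 x := by
  rw [← sqrt_one, ← sqrt_monotone.map_min, sq_sqrt (le_min zero_le_one hx), sqrt_one]

lemma sum_le_sqrt_card_mul_sum_sq {ι : Type*} (s : Finset ι) (f : ι → ℝ) :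
    ∑ i ∈ s, f i ≤ √(#s * ∑ i ∈ s, f i ^ 2) :=
  le_sqrt_of_sq_le sq_sum_le_card_mul_sum_sq

end Real

namespace Matrix

variable {n : Type*} [Fintype n]

lemma det_add_vecMulVec_s12 [DecidableEq n] {α : Type*} [CommRing α] {A : Matrix n n α}
    (hA : IsUnit A.det) (u v : n → α) :
    (A + vecMulVec u v).det = A.det * (1 + v ⬝ᵥ (A⁻¹ *ᵥ u)) := by
  rw [vecMulVec_eq Unit, det_add_replicateCol_mul_replicateRow hA, Matrix.mul_assoc,
    ← replicateCol_mulVec, det_unique (1 + _), add_apply, one_apply_eq,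
    replicateRow_mul_replicateCol_apply]

lemma PosDef.dotProduct_inv_mulVec_nonneg [DecidableEq n] {A : Matrix n n ℝ} (hA : A.PosDef)
    (u : n → ℝ) : 0 ≤ u ⬝ᵥ (A⁻¹ *ᵥ u) := by
  simpa using hA.inv.posSemidef.dotProduct_mulVec_nonneg u

variable {V : ℕ → Matrix n n ℝ} {a : ℕ → n → ℝ} {T : ℕ}

lemma posDef_of_add_vecMulVec (hV₁ : (V 1).PosDef)
    (hV : ∀ t ∈ Icc 1 T, V (t + 1) = V t + vecMulVec (a t) (a t)) :
    ∀ t ∈ Icc 1 (T + 1), (V t).PosDef := by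
  induction T with
  | zero => simp_all
  | succ T ih =>
    have ih := ih fun s hs => hV s (Icc_subset_Icc_right T.le_succ hs)
    intro t ht
    obtain ht | rfl : t ∈ Icc 1 (T + 1) ∨ t = T + 2 := by
      rw [mem_Icc] at ht ⊢; omega
    · exact ih t ht
    · rw [hV (T + 1) (by simp)]
      exact (ih (T + 1) (by simp)).add_posSemidef (posSemidef_vecMulVec_self_star _)

variable [DecidableEq n]

lemma dotProduct_inv_mulVec_nonneg_of_add_vecMulVec (hV₁ : (V 1).PosDef)
    (hV : ∀ t ∈ Icc 1 T, V (t + 1) = V t + vecMulVec (a t) (a t)) :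
    ∀ t ∈ Icc 1 T, 0 ≤ a t ⬝ᵥ ((V t)⁻¹ *ᵥ a t) := fun t ht =>
  (posDef_of_add_vecMulVec hV₁ hV t (Icc_subset_Icc_right T.le_succ ht)
    |>.dotProduct_inv_mulVec_nonneg _)

lemma det_eq_det_mul_prod_of_add_vecMulVec (hV₁ : (V 1).PosDef)
    (hV : ∀ t ∈ Icc 1 T, V (t + 1) = V t + vecMulVec (a t) (a t)) :
    (V (T + 1)).det = (V 1).det * ∏ t ∈ Icc 1 T, (1 + a t ⬝ᵥ ((V t)⁻¹ *ᵥ a t)) := by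
  induction T with
  | zero => simp
  | succ T ih =>
    have hPD := posDef_of_add_vecMulVec hV₁ hV (T + 1) (by simp)
    rw [hV (T + 1) (by simp), det_add_vecMulVec_s12 hPD.det_pos.ne'.isUnit,
      prod_Icc_succ_top (by omega), ← mul_assoc,
      ← ih fun s hs => hV s (Icc_subset_Icc_right T.le_succ hs)]

theorem sum_min_one_le_two_mul_log_det_div (hV₁ : (V 1).PosDef)
    (hV : ∀ t ∈ Icc 1 T, V (t + 1) = V t + vecMulVec (a t) (a t)) :
    ∑ t ∈ Icc 1 T, min 1 (a t ⬝ᵥ ((V t)⁻¹ *ᵥ a t))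
      ≤ 2 * Real.log ((V (T + 1)).det / (V 1).det) := by
  have hx := dotProduct_inv_mulVec_nonneg_of_add_vecMulVec hV₁ hV
  rw [det_eq_det_mul_prod_of_add_vecMulVec hV₁ hV, mul_div_cancel_left₀ _ hV₁.det_pos.ne',
    Real.log_prod fun t ht => by linarith [hx t ht], mul_sum]
  exact sum_le_sum fun t ht => Real.min_one_le_two_mul_log_one_add (hx t ht)

end Matrix

theorem stmt_12_general (d : ℕ) (lam : ℝ) (hlam : 0 < lam)
    (T : ℕ) (a : ℕ → Fin d → ℝ)
    (V : ℕ → Matrix (Fin d) (Fin d) ℝ)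
    (hV1 : V 1 = lam • (1 : Matrix (Fin d) (Fin d) ℝ))
    (hVrec : ∀ t ∈ Finset.Icc 1 T, V (t + 1) = V t + vecMulVec (a t) (a t)) :
    ∑ t ∈ Finset.Icc 1 T, min 1 (Real.sqrt (a t ⬝ᵥ ((V t)⁻¹ *ᵥ a t)))
      ≤ Real.sqrt (2 * T * Real.log ((V (T + 1)).det / lam ^ d)) := by
  have hV₁ : (V 1).PosDef := hV1 ▸ PosDef.one.smul hlam
  have hpot := sum_min_one_le_two_mul_log_det_div hV₁ hVrec
  rw [hV1, det_smul, det_one, mul_one, Fintype.card_fin] at hpot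
  have hx := dotProduct_inv_mulVec_nonneg_of_add_vecMulVec hV₁ hVrec
  calc _ ≤ √(#(Icc 1 T) * ∑ t ∈ Icc 1 T, min 1 √(a t ⬝ᵥ ((V t)⁻¹ *ᵥ a t)) ^ 2) :=
        Real.sum_le_sqrt_card_mul_sum_sq _ _
    _ = √(T * ∑ t ∈ Icc 1 T, min 1 (a t ⬝ᵥ ((V t)⁻¹ *ᵥ a t))) := by
        rw [Nat.card_Icc, Nat.add_sub_cancel,
          sum_congr rfl fun t ht => Real.min_one_sqrt_sq (hx t ht)]
    _ ≤ _ := Real.sqrt_le_sqrt (by rw [mul_assoc, mul_left_comm]; gcongr)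

theorem stmt_12 (d : ℕ) (hd : 1 ≤ d) (lam : ℝ) (hlam : 0 < lam)
    (T : ℕ) (hT : 1 ≤ T) (a : ℕ → Fin d → ℝ)
    (V : ℕ → Matrix (Fin d) (Fin d) ℝ)
    (hV1 : V 1 = lam • (1 : Matrix (Fin d) (Fin d) ℝ))
    (hVrec : ∀ t ∈ Finset.Icc 1 T, V (t + 1) = V t + vecMulVec (a t) (a t)) :
    ∑ t ∈ Finset.Icc 1 T, min 1 (Real.sqrt (a t ⬝ᵥ ((V t)⁻¹ *ᵥ a t)))
      ≤ Real.sqrt (2 * T * Real.log ((V (T + 1)).det / lam ^ d)) :=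
  stmt_12_general d lam hlam T a V hV1 hVrec
end

section
/- Let a < b be real numbers and α > 0. If u is drawn uniformly from [0, α), then the Lebesgue measure of the set of shifts u ∈ [0, α) for which some grid boundary u + kα (k ∈ ℤ) lies in the interval (a, b] is equal to min{b − a, α}; in particular, the probability of this event is at most (b − a)/α. -/
/-!
The shifts in question are the points of `[0, α)` lying in the `α`-periodic set
`P = (a, b] - αℤ`. Since `[0, α)` and `(a, a + α]` are both fundamental domains of `αℤ`
(up to a null set), `P` has the same measure on either, and on `(a, a + α]` it is
exactly `(a, min b (a + α)]`.
-/

open MeasureTheory Set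

lemma measure_inter_Ioc_eq_of_add_mem_iff (μ : Measure ℝ) [μ.IsAddLeftInvariant] {α : ℝ}
    (hα : 0 < α) {A : Set ℝ} (hA : MeasurableSet A) (hper : ∀ x, x + α ∈ A ↔ x ∈ A)
    (s t : ℝ) : μ (A ∩ Ioc s (s + α)) = μ (A ∩ Ioc t (t + α)) := by
  have hperiodic : Function.Periodic (· ∈ A) α := fun x ↦ propext (hper x)
  refine (isAddFundamentalDomain_Ioc hα s μ).measure_set_eq
    (isAddFundamentalDomain_Ioc hα t μ) hA fun ⟨g, hg⟩ ↦ ?_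
  obtain ⟨n, rfl⟩ := AddSubgroup.mem_zmultiples_iff.mp hg
  ext x
  simpa [add_comm] using hperiodic.zsmul n x

lemma measurableSet_setOf_exists_add_intCast_mul_mem {s : Set ℝ} (hs : MeasurableSet s)
    (α : ℝ) : MeasurableSet {x | ∃ k : ℤ, x + k * α ∈ s} := by
  simp only [ofPred_exists]
  exact MeasurableSet.iUnion fun k ↦ measurable_add_const _ hs

lemma exists_add_intCast_mul_mem_add_iff (s : Set ℝ) (α x : ℝ) :
    (∃ k : ℤ, x + α + k * α ∈ s) ↔ ∃ k : ℤ, x + k * α ∈ s := by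
  constructor
  · rintro ⟨k, hk⟩
    exact ⟨k + 1, by push_cast; convert hk using 1; ring⟩
  · rintro ⟨k, hk⟩
    exact ⟨k - 1, by push_cast; convert hk using 1; ring⟩

lemma setOf_exists_add_intCast_mul_mem_Ioc_inter_Ioc {α : ℝ} (hα : 0 ≤ α) (a b : ℝ) :
    {x | ∃ k : ℤ, x + k * α ∈ Ioc a b} ∩ Ioc a (a + α) = Ioc a (min b (a + α)) := by
  ext x
  simp only [mem_inter_iff, mem_ofPred_eq, mem_Ioc, le_min_iff]
  constructor
  · rintro ⟨⟨k, hak, hkb⟩, hax, hxa⟩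
    refine ⟨hax, ?_, hxa⟩
    rcases lt_or_ge k 0 with hk | hk
    · have : (k : ℝ) ≤ -1 := by exact_mod_cast Int.le_sub_one_of_lt hk
      nlinarith
    · have : (0 : ℝ) ≤ k := by exact_mod_cast hk
      nlinarith
  · rintro ⟨hax, hxb, hxa⟩
    exact ⟨⟨0, by simpa using ⟨hax, hxb⟩⟩, hax, hxa⟩

theorem stmt_18_general (a b α : ℝ) (hα : 0 < α) :
    volume {u ∈ Set.Ico (0 : ℝ) α | ∃ k : ℤ, u + k * α ∈ Set.Ioc a b}
        = ENNReal.ofReal (min (b - a) α) ∧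
      volume {u ∈ Set.Ico (0 : ℝ) α | ∃ k : ℤ, u + k * α ∈ Set.Ioc a b}
          / ENNReal.ofReal α
        ≤ ENNReal.ofReal ((b - a) / α) := by
  set P := {x : ℝ | ∃ k : ℤ, x + k * α ∈ Ioc a b}
  have hvol : volume (Ico 0 α ∩ P) = ENNReal.ofReal (min (b - a) α) := calc
    volume (Ico 0 α ∩ P) = volume (P ∩ Ioc 0 (0 + α)) := by
      rw [inter_comm, zero_add]
      exact measure_congr (Filter.EventuallyEq.rfl.inter Ico_ae_eq_Ioc)
    _ = volume (P ∩ Ioc a (a + α)) :=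
      measure_inter_Ioc_eq_of_add_mem_iff volume hα
        (measurableSet_setOf_exists_add_intCast_mul_mem measurableSet_Ioc α)
        (exists_add_intCast_mul_mem_add_iff _ α) 0 a
    _ = ENNReal.ofReal (min (b - a) α) := by
      rw [setOf_exists_add_intCast_mul_mem_Ioc_inter_Ioc hα.le, Real.volume_Ioc,
        ← min_sub_sub_right, add_sub_cancel_left]
  refine ⟨hvol, ?_⟩
  calc volume (Ico 0 α ∩ P) / ENNReal.ofReal α
      ≤ ENNReal.ofReal (b - a) / ENNReal.ofReal α := by
        rw [hvol]; gcongr; exact min_le_left _ _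
    _ = ENNReal.ofReal ((b - a) / α) := (ENNReal.ofReal_div_of_pos hα).symm

theorem stmt_18 (a b α : ℝ) (hab : a < b) (hα : 0 < α) :
    volume {u ∈ Set.Ico (0 : ℝ) α | ∃ k : ℤ, u + k * α ∈ Set.Ioc a b}
        = ENNReal.ofReal (min (b - a) α) ∧
      volume {u ∈ Set.Ico (0 : ℝ) α | ∃ k : ℤ, u + k * α ∈ Set.Ioc a b}
          / ENNReal.ofReal α
        ≤ ENNReal.ofReal ((b - a) / α) :=
  stmt_18_general a b α hα
end
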